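/- arXiv:2204.01149 — 2 statements merged into one kernel-verified Lean document; each statement's English description precedes it below -/
import Mathlib

section
/- Let p satisfy the hard-sphere assumptions and suppose p is twice continuously differentiable on (0, ρ̄). Fix α₀ ∈ (0, ρ̄/2) and α₀ ≤ r ≤ ρ̄ − α₀. Then there exist α₁ ∈ (0, α₀) and c > 0 such that: p(ρ) − p(r) − p'(r)(ρ − r) ≤ c(ρ − r)² for ρ ∈ (α₁, ρ̄ − α₁); p(ρ) − p(r) − p'(r)(ρ − r) ≤ 1 + p'(r)r − p(r) for ρ ∈ [0, α₁]; and p(ρ) − p(r) − p'(r)(ρ − r) ≤ 2p(ρ) for ρ ∈ [ρ̄ − α₁, ρ̄). -/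
open Set Filter Topology

noncomputable section

/-! On the compact interval `[α₁, ρbar - α₁]` the second derivative of `p` is bounded, which
gives the quadratic bound by Taylor's theorem with a sup-norm remainder. Since `p` is increasing
with `p 0 = 0`, it is nonnegative; continuity at `0` lets us pick `α₁` with `p α₁ < 1`, which
gives the bound near `0`. Near `ρbar` we have `ρ ≥ r`, so the left-hand side is at most
`p ρ - p r ≤ 2 p ρ`. -/

theorem Convex.abs_sub_sub_deriv_mul_le {s : Set ℝ} (hs : Convex ℝ s) {f f' f'' : ℝ → ℝ} {L : ℝ}
    (hf : ∀ x ∈ s, HasDerivWithinAt f (f' x) s x)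
    (hf' : ∀ x ∈ s, HasDerivWithinAt f' (f'' x) s x)
    (hbound : ∀ x ∈ s, |f'' x| ≤ L) {x y : ℝ} (hx : x ∈ s) (hy : y ∈ s) :
    |f y - f x - f' x * (y - x)| ≤ L * (y - x) ^ 2 := by
  have hL : 0 ≤ L := (abs_nonneg _).trans (hbound x hx)
  have hxy : uIcc x y ⊆ s := hs.ordConnected.uIcc_subset hx hy
  have hslope : ∀ z ∈ uIcc x y, ‖f' z - f' x‖ ≤ L * |y - x| := fun z hz =>
    calc ‖f' z - f' x‖ ≤ L * ‖z - x‖ :=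
          hs.norm_image_sub_le_of_norm_hasDerivWithin_le hf' hbound hx (hxy hz)
      _ ≤ L * |y - x| := mul_le_mul_of_nonneg_left (abs_sub_left_of_mem_uIcc hz) hL
  have hremainder : ∀ z ∈ uIcc x y, HasDerivWithinAt (fun z => f z - f x - f' x * (z - x))
      (f' z - f' x) (uIcc x y) z := fun z hz => by
    have hlin : HasDerivWithinAt (fun z => f' x * (z - x)) (f' x) (uIcc x y) z := by
      simpa using ((hasDerivWithinAt_id z _).sub_const x).const_mul (f' x)
    exact (((hf z (hxy hz)).mono hxy).sub_const (f x)).sub hlin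
  have hmvt := (convex_uIcc x y).norm_image_sub_le_of_norm_hasDerivWithin_le hremainder hslope
    left_mem_uIcc right_mem_uIcc
  simpa [mul_assoc, ← sq] using hmvt

theorem exists_abs_sub_sub_deriv_mul_le_of_contDiffOn {f : ℝ → ℝ} {U K : Set ℝ} (hU : IsOpen U)
    (hf : ContDiffOn ℝ 2 f U) (hK : IsCompact K) (hKc : Convex ℝ K) (hKU : K ⊆ U) :
    ∃ C > 0, ∀ x ∈ K, ∀ y ∈ K, |f y - f x - deriv f x * (y - x)| ≤ C * (y - x) ^ 2 := by
  have hf' : ContDiffOn ℝ 1 (deriv f) U := hf.deriv_of_isOpen hU (by norm_num)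
  obtain ⟨L, hL⟩ :=
    hK.exists_bound_of_continuousOn ((hf'.continuousOn_deriv_of_isOpen hU le_rfl).mono hKU)
  have hderiv : ∀ g : ℝ → ℝ, ContDiffOn ℝ 1 g U → ∀ z ∈ K, HasDerivWithinAt g (deriv g z) K z :=
    fun g hg z hz => ((hg.differentiableOn one_ne_zero).differentiableAt
      (hU.mem_nhds (hKU hz))).hasDerivAt.hasDerivWithinAt
  refine ⟨max L 1, by positivity, fun x hx y hy => ?_⟩
  exact hKc.abs_sub_sub_deriv_mul_le (hderiv f (hf.of_le (by norm_num))) (hderiv _ hf')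
    (fun z hz => (hL z hz).trans (le_max_left _ _)) hx hy

theorem pressure_upper_bounds_general
    (ρbar : ℝ) (hρbar : 0 < ρbar)
    (p : ℝ → ℝ)
    (hp1 : ContDiffOn ℝ 1 p (Set.Ico 0 ρbar))
    (hp2 : ContDiffOn ℝ 2 p (Set.Ioo 0 ρbar))
    (hp0 : p 0 = 0)
    (hp' : ∀ s ∈ Set.Ioo (0 : ℝ) ρbar, 0 < deriv p s)
    (α₀ : ℝ) (hα₀ : α₀ ∈ Set.Ioo (0 : ℝ) (ρbar / 2))
    (r : ℝ) (hr : r ∈ Set.Icc α₀ (ρbar - α₀)) :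
    ∃ α₁ ∈ Set.Ioo (0 : ℝ) α₀, ∃ c > (0 : ℝ),
      (∀ ρ ∈ Set.Ioo α₁ (ρbar - α₁),
        p ρ - p r - deriv p r * (ρ - r) ≤ c * (ρ - r) ^ 2) ∧
      (∀ ρ ∈ Set.Icc (0 : ℝ) α₁,
        p ρ - p r - deriv p r * (ρ - r) ≤ 1 + deriv p r * r - p r) ∧
      (∀ ρ ∈ Set.Ico (ρbar - α₁) ρbar,
        p ρ - p r - deriv p r * (ρ - r) ≤ 2 * p ρ) := by
  obtain ⟨hα₀, hα₀ρbar⟩ := hα₀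
  obtain ⟨hα₀r, hrρbar⟩ := hr
  have hpr : 0 < deriv p r := hp' r ⟨by linarith, by linarith⟩
  have hmono : MonotoneOn p (Ico 0 ρbar) :=
    (strictMonoOn_of_deriv_pos (convex_Ico 0 ρbar) hp1.continuousOn
      (by simpa only [interior_Ico] using hp')).monotoneOn
  have hp_small : ∀ᶠ x in 𝓝[>] 0, p x < 1 := by
    have hcont : Tendsto p (𝓝[≥] 0) (𝓝 (p 0)) := by
      simpa only [ContinuousWithinAt, nhdsWithin_Ico_eq_nhdsGE hρbar] using
        hp1.continuousOn.continuousWithinAt (left_mem_Ico.mpr hρbar)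
    exact (hcont.mono_left (nhdsWithin_mono _ Ioi_subset_Ici_self)).eventually
      (gt_mem_nhds (by rw [hp0]; exact one_pos))
  obtain ⟨α₁, hpα₁, hα₁, hα₁α₀⟩ := (hp_small.and (Ioo_mem_nhdsGT hα₀)).exists
  obtain ⟨c, hc, hquad⟩ := exists_abs_sub_sub_deriv_mul_le_of_contDiffOn isOpen_Ioo hp2
    isCompact_Icc (convex_Icc α₁ (ρbar - α₁)) (Icc_subset_Ioo hα₁ (by linarith))
  refine ⟨α₁, ⟨hα₁, hα₁α₀⟩, c, hc, fun ρ hρ => ?_, fun ρ hρ => ?_, fun ρ hρ => ?_⟩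
  · exact (le_abs_self _).trans
      (hquad r ⟨by linarith, hrρbar.trans (by linarith)⟩ ρ (Ioo_subset_Icc_self hρ))
  · have hp_ρ : p ρ ≤ p α₁ := hmono ⟨hρ.1, by linarith [hρ.2]⟩ ⟨hα₁.le, by linarith⟩ hρ.2
    nlinarith [hρ.1]
  · have hp_r : p 0 ≤ p r := hmono ⟨le_rfl, hρbar⟩ ⟨by linarith, by linarith⟩ (by linarith)
    have hp_ρ : p 0 ≤ p ρ := hmono ⟨le_rfl, hρbar⟩ ⟨by linarith [hρ.1], hρ.2⟩ (by linarith [hρ.1])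
    nlinarith [hρ.1]

theorem pressure_upper_bounds
    (ρbar : ℝ) (hρbar : 0 < ρbar)
    (p : ℝ → ℝ)
    (hp1 : ContDiffOn ℝ 1 p (Set.Ico 0 ρbar))
    (hp2 : ContDiffOn ℝ 2 p (Set.Ioo 0 ρbar))
    (hp0 : p 0 = 0)
    (hp' : ∀ s ∈ Set.Ioo (0 : ℝ) ρbar, 0 < deriv p s)
    (hptop : Tendsto p (nhdsWithin ρbar (Set.Iio ρbar)) atTop)
    (α₀ : ℝ) (hα₀ : α₀ ∈ Set.Ioo (0 : ℝ) (ρbar / 2))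
    (r : ℝ) (hr : r ∈ Set.Icc α₀ (ρbar - α₀)) :
    ∃ α₁ ∈ Set.Ioo (0 : ℝ) α₀, ∃ c > (0 : ℝ),
      (∀ ρ ∈ Set.Ioo α₁ (ρbar - α₁),
        p ρ - p r - deriv p r * (ρ - r) ≤ c * (ρ - r) ^ 2) ∧
      (∀ ρ ∈ Set.Icc (0 : ℝ) α₁,
        p ρ - p r - deriv p r * (ρ - r) ≤ 1 + deriv p r * r - p r) ∧
      (∀ ρ ∈ Set.Ico (ρbar - α₁) ρbar,
        p ρ - p r - deriv p r * (ρ - r) ≤ 2 * p ρ) :=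
  pressure_upper_bounds_general ρbar hρbar p hp1 hp2 hp0 hp' α₀ hα₀ r hr
end
end

section
/- Let Ω ⊂ ℝᵈ be a bounded measurable set and ρ : Ω → [0, ρ̄) measurable with mean m = |Ω|^{-1}∫_Ω ρ satisfying m < ρ̄. Let p : [0, ρ̄) → [0, ∞) be continuous and nondecreasing. Then (1/|Ω|)∫_Ω p(ρ)(ρ − m) dx ≥ ((ρ̄ − m)/(2|Ω|)) ∫_{{ρ > (ρ̄+m)/2}} p(ρ) dx − p((ρ̄+m)/2)·(ρ̄ − m)/2, and consequently (1/|Ω|)∫_Ω p(ρ) dx ≤ p((ρ̄+m)/2) + (2/(ρ̄ − m))·[ (1/|Ω|)|∫_Ω p(ρ)(ρ − m) dx| + p((ρ̄+m)/2)(ρ̄−m)/2 ]. -/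
/-!
Put `c = (ρ̄ + m) / 2`. Splitting at `ρ = c`, monotonicity of `p` gives the pointwise bound
`p(ρ)(ρ - m) ≥ (c - m)·1_{ρ > c}·p(ρ) + p(c)(ρ - m) - p(c)(c - m)`; integrating it, the middle
term vanishes because `m` is the mean of `ρ`. The bound on the mean pressure then follows from
`p(ρ) ≤ 1_{ρ > c}·p(ρ) + p(c)`.
-/

open Set MeasureTheory

namespace MonotoneOn

variable {α : Type*} {S : Set ℝ} {p : ℝ → ℝ} {f : α → ℝ} {c m : ℝ} {x : α}

theorem indicator_add_le_mul_sub (hp : MonotoneOn p S) (hp0 : ∀ s ∈ S, 0 ≤ p s)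
    (hc : c ∈ S) (hmc : m ≤ c) (hx : f x ∈ S) :
    (c - m) * {x | c < f x}.indicator (fun x => p (f x)) x + p c * (f x - m) - p c * (c - m)
      ≤ p (f x) * (f x - m) := by
  by_cases hcx : c < f x
  · rw [indicator_of_mem (show x ∈ {x | c < f x} from hcx)]
    nlinarith [mul_nonneg (sub_nonneg.2 (hp hc hx hcx.le)) (sub_nonneg.2 hcx.le)]
  · rw [indicator_of_notMem (show x ∉ {x | c < f x} from hcx)]
    nlinarith [mul_nonneg (sub_nonneg.2 (hp hx hc (not_lt.1 hcx))) (sub_nonneg.2 (not_lt.1 hcx)),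
      mul_nonneg (hp0 _ hx) (sub_nonneg.2 hmc)]

theorem le_indicator_add (hp : MonotoneOn p S) (hc : c ∈ S) (hpc : 0 ≤ p c) (hx : f x ∈ S) :
    p (f x) ≤ {x | c < f x}.indicator (fun x => p (f x)) x + p c := by
  by_cases hcx : c < f x
  · rw [indicator_of_mem (show x ∈ {x | c < f x} from hcx)]
    linarith
  · rw [indicator_of_notMem (show x ∉ {x | c < f x} from hcx), zero_add]
    exact hp hx hc (not_lt.1 hcx)

variable [MeasurableSpace α] {μ : Measure α} [IsFiniteMeasure μ]

theorem sub_mul_setIntegral_sub_le_integral_mul_sub (hp : MonotoneOn p S)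
    (hp0 : ∀ s ∈ S, 0 ≤ p s) (hc : c ∈ S) (hmc : m ≤ c) (hf : Measurable f)
    (hfS : ∀ᵐ x ∂μ, f x ∈ S) (hfi : Integrable f μ) (hmean : ∫ x, f x ∂μ = μ.real univ * m)
    (hpf : Integrable (fun x => p (f x)) μ)
    (hpfm : Integrable (fun x => p (f x) * (f x - m)) μ) :
    (c - m) * ∫ x in {x | c < f x}, p (f x) ∂μ - p c * (c - m) * μ.real univ
      ≤ ∫ x, p (f x) * (f x - m) ∂μ := by
  have hA : MeasurableSet {x | c < f x} := measurableSet_lt measurable_const hf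
  have hind : Integrable ({x | c < f x}.indicator fun x => p (f x)) μ := hpf.indicator hA
  have hlin : Integrable (fun x => p c * (f x - m)) μ := (hfi.sub (integrable_const m)).const_mul _
  have hsum : Integrable (fun x => (c - m) * {x | c < f x}.indicator (fun x => p (f x)) x
      + p c * (f x - m)) μ := (hind.const_mul _).add hlin
  have hcentred : ∫ x, (f x - m) ∂μ = 0 := by
    rw [integral_sub hfi (integrable_const m), hmean, integral_const, smul_eq_mul, sub_self]
  calc (c - m) * ∫ x in {x | c < f x}, p (f x) ∂μ - p c * (c - m) * μ.real univ
      = ∫ x, ((c - m) * {x | c < f x}.indicator (fun x => p (f x)) x + p c * (f x - m)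
          - p c * (c - m)) ∂μ := by
        rw [integral_sub hsum (integrable_const _),
          integral_add (hind.const_mul _) hlin, integral_const_mul, integral_const_mul,
          integral_indicator hA, hcentred, integral_const, smul_eq_mul]
        ring
    _ ≤ ∫ x, p (f x) * (f x - m) ∂μ :=
        integral_mono_ae (hsum.sub (integrable_const _)) hpfm
          (hfS.mono fun x hx => indicator_add_le_mul_sub hp hp0 hc hmc hx)

theorem integral_le_setIntegral_add (hp : MonotoneOn p S) (hc : c ∈ S) (hpc : 0 ≤ p c)
    (hf : Measurable f) (hfS : ∀ᵐ x ∂μ, f x ∈ S) (hpf : Integrable (fun x => p (f x)) μ) :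
    ∫ x, p (f x) ∂μ ≤ ∫ x in {x | c < f x}, p (f x) ∂μ + p c * μ.real univ := by
  have hA : MeasurableSet {x | c < f x} := measurableSet_lt measurable_const hf
  calc ∫ x, p (f x) ∂μ
      ≤ ∫ x, ({x | c < f x}.indicator (fun x => p (f x)) x + p c) ∂μ :=
        integral_mono_ae hpf ((hpf.indicator hA).add (integrable_const _))
          (hfS.mono fun x hx => le_indicator_add hp hc hpc hx)
    _ = ∫ x in {x | c < f x}, p (f x) ∂μ + p c * μ.real univ := by
        rw [integral_add (hpf.indicator hA) (integrable_const _), integral_indicator hA,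
          integral_const, smul_eq_mul, mul_comm]

end MonotoneOn

theorem setIntegral_sep_eq_restrict {α : Type*} [MeasurableSpace α] {μ : Measure α}
    {Ω : Set α} {P : α → Prop} (hP : MeasurableSet {x | P x}) (g : α → ℝ) :
    ∫ x in {x ∈ Ω | P x}, g x ∂μ = ∫ x in {x | P x}, g x ∂μ.restrict Ω := by
  rw [Measure.restrict_restrict hP, inter_comm]
  rfl

section Rescaling

variable {V e a I J K : ℝ}

theorem sub_le_one_div_mul_of_le (hV : 0 < V) (h : e / 2 * J - a * (e / 2) * V ≤ I) :
    e / (2 * V) * J - a * e / 2 ≤ 1 / V * I := by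
  calc e / (2 * V) * J - a * e / 2 = (e / 2 * J - a * (e / 2) * V) / V := by field_simp
    _ ≤ I / V := div_le_div_of_nonneg_right h hV.le
    _ = 1 / V * I := by ring

theorem one_div_mul_le_of_le_of_le (hV : 0 < V) (he : 0 < e)
    (hJ : e / (2 * V) * J - a * e / 2 ≤ 1 / V * I) (hK : K ≤ J + a * V) :
    1 / V * K ≤ a + 2 / e * (1 / V * |I| + a * e / 2) := by
  have hJ' : 1 / V * J ≤ 2 / e * (1 / V * |I| + a * e / 2) := by
    calc 1 / V * J = 2 / e * (e / (2 * V) * J) := by field_simp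
      _ ≤ 2 / e * (1 / V * |I| + a * e / 2) := by
        gcongr
        linarith [mul_le_mul_of_nonneg_left (le_abs_self I) (one_div_nonneg.2 hV.le)]
  calc 1 / V * K ≤ 1 / V * (J + a * V) := by gcongr
    _ = a + 1 / V * J := by field_simp; ring
    _ ≤ _ := by linarith

end Rescaling

theorem mean_pressure_bound_general
    (d : ℕ) (ρbar : ℝ)
    (Ω : Set (Fin d → ℝ)) (hΩmeas : MeasurableSet Ω)
    (hΩbdd : Bornology.IsBounded Ω) (hΩpos : 0 < (volume Ω).toReal)
    (ρ : (Fin d → ℝ) → ℝ) (hρmeas : Measurable ρ)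
    (hρrange : ∀ x ∈ Ω, 0 ≤ ρ x ∧ ρ x < ρbar)
    (m : ℝ) (hm : m = (1 / (volume Ω).toReal) * ∫ x in Ω, ρ x)
    (hmlt : m < ρbar)
    (p : ℝ → ℝ)
    (hpmono : MonotoneOn p (Set.Ico 0 ρbar))
    (hpnonneg : ∀ s ∈ Set.Ico (0 : ℝ) ρbar, 0 ≤ p s)
    (hint : IntegrableOn (fun x => p (ρ x)) Ω volume)
    (hint' : IntegrableOn (fun x => p (ρ x) * (ρ x - m)) Ω volume) :
    ((ρbar - m) / (2 * (volume Ω).toReal)) *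
        (∫ x in {x ∈ Ω | (ρbar + m) / 2 < ρ x}, p (ρ x)) -
        p ((ρbar + m) / 2) * (ρbar - m) / 2
      ≤ (1 / (volume Ω).toReal) * ∫ x in Ω, p (ρ x) * (ρ x - m) ∧
    (1 / (volume Ω).toReal) * (∫ x in Ω, p (ρ x))
      ≤ p ((ρbar + m) / 2) +
        (2 / (ρbar - m)) *
          ((1 / (volume Ω).toReal) * |∫ x in Ω, p (ρ x) * (ρ x - m)| +
            p ((ρbar + m) / 2) * (ρbar - m) / 2) := by
  have hΩfin : volume Ω ≠ ⊤ := hΩbdd.measure_lt_top.ne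
  have : IsFiniteMeasure (volume.restrict Ω) := isFiniteMeasure_restrict.2 hΩfin
  have hρΩ : ∀ᵐ x ∂volume.restrict Ω, ρ x ∈ Ico 0 ρbar := ae_restrict_of_forall_mem hΩmeas hρrange
  have hρint : IntegrableOn ρ Ω := Measure.integrableOn_of_bounded (M := ρbar) hΩfin
    hρmeas.aestronglyMeasurable (hρΩ.mono fun x hx => abs_le.2 ⟨by linarith [hx.1, hx.2], hx.2.le⟩)
  have hmean : ∫ x in Ω, ρ x = (volume.restrict Ω).real univ * m := by
    rw [measureReal_restrict_apply_univ, hm, measureReal_def]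
    field_simp
  have hm0 : 0 ≤ m := hm ▸ mul_nonneg (by positivity)
    (setIntegral_nonneg hΩmeas fun x hx => (hρrange x hx).1)
  have hc : (ρbar + m) / 2 ∈ Ico 0 ρbar := ⟨by linarith, by linarith⟩
  have hlow := hpmono.sub_mul_setIntegral_sub_le_integral_mul_sub hpnonneg hc (by linarith)
    hρmeas hρΩ hρint hmean hint hint'
  have hupp := hpmono.integral_le_setIntegral_add hc (hpnonneg _ hc) hρmeas hρΩ hint
  rw [← setIntegral_sep_eq_restrict (measurableSet_lt measurable_const hρmeas),
    measureReal_restrict_apply_univ, measureReal_def] at hlow hupp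
  rw [show (ρbar + m) / 2 - m = (ρbar - m) / 2 by ring] at hlow
  have hcorr := sub_le_one_div_mul_of_le hΩpos hlow
  exact ⟨hcorr, one_div_mul_le_of_le_of_le hΩpos (sub_pos.2 hmlt) hcorr hupp⟩

theorem mean_pressure_bound
    (d : ℕ) (ρbar : ℝ) (hρbar : 0 < ρbar)
    (Ω : Set (Fin d → ℝ)) (hΩmeas : MeasurableSet Ω)
    (hΩbdd : Bornology.IsBounded Ω) (hΩpos : 0 < (volume Ω).toReal)
    (ρ : (Fin d → ℝ) → ℝ) (hρmeas : Measurable ρ)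
    (hρrange : ∀ x ∈ Ω, 0 ≤ ρ x ∧ ρ x < ρbar)
    (m : ℝ) (hm : m = (1 / (volume Ω).toReal) * ∫ x in Ω, ρ x)
    (hmlt : m < ρbar)
    (p : ℝ → ℝ) (hpcont : ContinuousOn p (Set.Ico 0 ρbar))
    (hpmono : MonotoneOn p (Set.Ico 0 ρbar))
    (hpnonneg : ∀ s ∈ Set.Ico (0 : ℝ) ρbar, 0 ≤ p s)
    (hint : IntegrableOn (fun x => p (ρ x)) Ω volume)
    (hint' : IntegrableOn (fun x => p (ρ x) * (ρ x - m)) Ω volume) :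
    ((ρbar - m) / (2 * (volume Ω).toReal)) *
        (∫ x in {x ∈ Ω | (ρbar + m) / 2 < ρ x}, p (ρ x)) -
        p ((ρbar + m) / 2) * (ρbar - m) / 2
      ≤ (1 / (volume Ω).toReal) * ∫ x in Ω, p (ρ x) * (ρ x - m) ∧
    (1 / (volume Ω).toReal) * (∫ x in Ω, p (ρ x))
      ≤ p ((ρbar + m) / 2) +
        (2 / (ρbar - m)) *
          ((1 / (volume Ω).toReal) * |∫ x in Ω, p (ρ x) * (ρ x - m)| +
            p ((ρbar + m) / 2) * (ρbar - m) / 2) :=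
  mean_pressure_bound_general d ρbar Ω hΩmeas hΩbdd hΩpos ρ hρmeas hρrange m hm hmlt p hpmono
    hpnonneg hint hint'
end
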